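/- On ℂ² \ {0}, let ω₋ = (i/R²)(dz₁∧dz̄₁ + dz₂∧dz̄₂) with respect to the standard complex structure J₋, and let ω₊ = (i/R²)(dz₁∧dz̄₁ - dz₂∧dz̄₂) be the fundamental form of the same metric with respect to the complex structure J₊ obtained by conjugating the z₂-coordinate. Then d^c₊ ω₊ = -d^c₋ ω₋, where d^c_± = -J_± d J_±. -/
import Mathlib

noncomputable section
open Complex

/-- Punctured `ℂ²` ambient space. -/
abbrev Csq : Type := ℂ × ℂ

/-- `R² = |z₁|² + |z₂|²`. -/
def Rsq (x : Csq) : ℝ := Complex.normSq x.1 + Complex.normSq x.2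

/-- Wedge product of `n` (point-dependent) 1-forms, evaluated at `x` on vectors `v`. -/
def wedge {n : ℕ} (α : Fin n → (Csq → Csq → ℂ)) (x : Csq) (v : Fin n → Csq) : ℂ :=
  ∑ σ : Equiv.Perm (Fin n), ((Equiv.Perm.sign σ : ℤ) : ℂ) * ∏ i, α i x (v (σ i))

/-- The exterior derivative of an `n`-form (given as a raw function of a point and `n`
vectors), evaluated at `x` on `n+1` vectors. -/
def extD {n : ℕ} (ω : Csq → (Fin n → Csq) → ℂ) (x : Csq) (v : Fin (n+1) → Csq) : ℂ :=
  ∑ i : Fin (n+1), (-1 : ℂ) ^ (i : ℕ) *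
    fderiv ℝ (fun y => ω y (fun j => v (i.succAbove j))) x (v i)

/-- The 1-form `dz₁`. -/
def dz1 : Csq → Csq → ℂ := fun _ v => v.1
/-- The 1-form `dz̄₁`. -/
def dzb1 : Csq → Csq → ℂ := fun _ v => starRingEnd ℂ v.1
/-- The 1-form `dz₂`. -/
def dz2 : Csq → Csq → ℂ := fun _ v => v.2
/-- The 1-form `dz̄₂`. -/
def dzb2 : Csq → Csq → ℂ := fun _ v => starRingEnd ℂ v.2
/-- The 1-form `z̄₁ dz₁ - z₁ dz̄₁`. -/
def theta1 : Csq → Csq → ℂ := fun x v => starRingEnd ℂ x.1 * v.1 - x.1 * starRingEnd ℂ v.1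
/-- The 1-form `z̄₂ dz₂ - z₂ dz̄₂`. -/
def theta2 : Csq → Csq → ℂ := fun x v => starRingEnd ℂ x.2 * v.2 - x.2 * starRingEnd ℂ v.2

/-- The torsion 3-form
`H = -(1/R⁴)[(z̄₂dz₂ - z₂dz̄₂)∧dz₁∧dz̄₁ + (z̄₁dz₁ - z₁dz̄₁)∧dz₂∧dz̄₂]`. -/
def Hform : Csq → (Fin 3 → Csq) → ℂ := fun x v =>
  -(1 / ((Rsq x : ℂ) ^ 2)) *
    (wedge ![theta2, dz1, dzb1] x v + wedge ![theta1, dz2, dzb2] x v)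

/-- The fundamental form `ω₋ = (i/R²)(dz₁∧dz̄₁ + dz₂∧dz̄₂)` of the Hopf metric. -/
def omegaMinus : Csq → (Fin 2 → Csq) → ℂ := fun x v =>
  (Complex.I / (Rsq x : ℂ)) * (wedge ![dz1, dzb1] x v + wedge ![dz2, dzb2] x v)

/-- The complex structure `J₋` of `ℂ²`, acting on tangent vectors. -/
def Jminus : Csq → Csq := fun v => (Complex.I * v.1, Complex.I * v.2)

/-- The complex structure `J₊` obtained from `J₋` by conjugating the `z₂`-coordinate
(holomorphic coordinates `(ζ₁, ζ₂) = (z₁, z̄₂)`), acting on tangent vectors. -/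
def Jplus : Csq → Csq := fun v => (Complex.I * v.1, -(Complex.I * v.2))

/-- The fundamental form `ω₊ = (i/R²)(dz₁∧dz̄₁ - dz₂∧dz̄₂)` of the Hopf metric with
respect to `J₊`. -/
def omegaPlus : Csq → (Fin 2 → Csq) → ℂ := fun x v =>
  (Complex.I / (Rsq x : ℂ)) * (wedge ![dz1, dzb1] x v - wedge ![dz2, dzb2] x v)

/-- `d^c₋ ω₋ = -J₋ dω₋`. -/
def dcOmegaMinus : Csq → (Fin 3 → Csq) → ℂ := fun x v =>
  - extD omegaMinus x (fun i => Jminus (v i))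

/-- `d^c₊ ω₊ = -J₊ dω₊`. -/
def dcOmegaPlus : Csq → (Fin 3 → Csq) → ℂ := fun x v =>
  - extD omegaPlus x (fun i => Jplus (v i))

-- auxiliary lemmas
lemma univ_perm2 : (Finset.univ : Finset (Equiv.Perm (Fin 2))) = {1, Equiv.swap 0 1} := by decide

lemma wedge2 (α β : Csq → Csq → ℂ) (x : Csq) (v : Fin 2 → Csq) :
    wedge ![α, β] x v = α x (v 0) * β x (v 1) - α x (v 1) * β x (v 0) := by
  rw [wedge, univ_perm2, Finset.sum_pair (by decide)]
  simp [Fin.prod_univ_two, Equiv.swap_apply_left, Equiv.swap_apply_right]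
  ring

lemma Rsq_pos (x : Csq) (hx : x ≠ 0) : 0 < Rsq x := by
  rw [Rsq]
  rcases not_and_or.mp (by simpa [Prod.ext_iff] using hx) with h | h
  · have := Complex.normSq_pos.mpr h
    nlinarith [Complex.normSq_nonneg x.2]
  · have := Complex.normSq_pos.mpr h
    nlinarith [Complex.normSq_nonneg x.1]

def fst' : Csq →L[ℝ] ℂ := ContinuousLinearMap.fst ℝ ℂ ℂ
def snd' : Csq →L[ℝ] ℂ := ContinuousLinearMap.snd ℝ ℂ ℂ
def cfst : Csq →L[ℝ] ℂ := Complex.conjCLE.toContinuousLinearMap.comp fst'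
def csnd : Csq →L[ℝ] ℂ := Complex.conjCLE.toContinuousLinearMap.comp snd'

lemma hasFDeriv_Rsq (x : Csq) :
    HasFDerivAt (fun y : Csq => ((Rsq y : ℝ) : ℂ))
      ((x.1 • cfst + (starRingEnd ℂ x.1) • fst') + (x.2 • csnd + (starRingEnd ℂ x.2) • snd')) x := by
  have : (fun y : Csq => ((Rsq y : ℝ) : ℂ))
      = fun y : Csq => y.1 * (starRingEnd ℂ y.1) + y.2 * (starRingEnd ℂ y.2) := by
    funext y
    simp [Rsq, Complex.mul_conj]
  rw [this]
  have h1 : HasFDerivAt (fun y : Csq => y.1) fst' x := (ContinuousLinearMap.fst ℝ ℂ ℂ).hasFDerivAt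
  have h2 : HasFDerivAt (fun y : Csq => y.2) snd' x := (ContinuousLinearMap.snd ℝ ℂ ℂ).hasFDerivAt
  have hc1 : HasFDerivAt (fun y : Csq => starRingEnd ℂ y.1) cfst x :=
    (Complex.conjCLE.toContinuousLinearMap.hasFDerivAt).comp x h1
  have hc2 : HasFDerivAt (fun y : Csq => starRingEnd ℂ y.2) csnd x :=
    (Complex.conjCLE.toContinuousLinearMap.hasFDerivAt).comp x h2
  exact (h1.mul hc1).add (h2.mul hc2)

lemma fderiv_gC (x : Csq) (hx : x ≠ 0) (C : ℂ) (u : Csq) :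
    fderiv ℝ (fun y : Csq => Complex.I / ((Rsq y : ℝ) : ℂ) * C) x u
      = C * (-Complex.I * (starRingEnd ℂ x.1 * u.1 + x.1 * starRingEnd ℂ u.1
          + starRingEnd ℂ x.2 * u.2 + x.2 * starRingEnd ℂ u.2) / (Rsq x : ℂ)^2) := by
  have hne : ((Rsq x : ℝ) : ℂ) ≠ 0 := by
    exact_mod_cast (ne_of_gt (Rsq_pos x hx))
  have hinv := (hasDerivAt_inv hne).comp_hasFDerivAt x (hasFDeriv_Rsq x)
  have h := (hinv.const_mul Complex.I).mul_const C
  have heq : (fun y : Csq => Complex.I / ((Rsq y : ℝ) : ℂ) * C)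
      = fun y : Csq => Complex.I * ((fun z : ℂ => z⁻¹) ∘ fun y : Csq => ((Rsq y : ℝ) : ℂ)) y * C := by
    funext y; simp [div_eq_mul_inv]
  rw [heq, h.fderiv]
  simp [fst', snd', cfst, csnd, smul_sub, ContinuousLinearMap.smul_apply, Complex.conjCLE]
  field_simp
  ring

/-- constant value of the `wedge dz+dzb` part of `omegaMinus`. -/
def Cm (w : Fin 2 → Csq) : ℂ :=
  ((w 0).1 * starRingEnd ℂ (w 1).1 - (w 1).1 * starRingEnd ℂ (w 0).1)
  + ((w 0).2 * starRingEnd ℂ (w 1).2 - (w 1).2 * starRingEnd ℂ (w 0).2)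
def Cp (w : Fin 2 → Csq) : ℂ :=
  ((w 0).1 * starRingEnd ℂ (w 1).1 - (w 1).1 * starRingEnd ℂ (w 0).1)
  - ((w 0).2 * starRingEnd ℂ (w 1).2 - (w 1).2 * starRingEnd ℂ (w 0).2)

lemma omegaMinus_eq (w : Fin 2 → Csq) :
    (fun y : Csq => omegaMinus y w) = fun y : Csq => Complex.I / ((Rsq y : ℝ) : ℂ) * Cm w := by
  funext y
  rw [omegaMinus, wedge2, wedge2, Cm]
  rfl

lemma omegaPlus_eq (w : Fin 2 → Csq) :
    (fun y : Csq => omegaPlus y w) = fun y : Csq => Complex.I / ((Rsq y : ℝ) : ℂ) * Cp w := by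
  funext y
  rw [omegaPlus, wedge2, wedge2, Cp]
  rfl

lemma extD_omegaMinus (x : Csq) (hx : x ≠ 0) (u : Fin 3 → Csq) :
    extD omegaMinus x u = ∑ i : Fin 3, (-1 : ℂ) ^ (i : ℕ) *
      (Cm (fun j => u (i.succAbove j)) *
        (-Complex.I * (starRingEnd ℂ x.1 * (u i).1 + x.1 * starRingEnd ℂ (u i).1
          + starRingEnd ℂ x.2 * (u i).2 + x.2 * starRingEnd ℂ (u i).2) / (Rsq x : ℂ)^2)) := by
  rw [extD]
  congr 1; funext i
  rw [omegaMinus_eq, fderiv_gC x hx]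

lemma extD_omegaPlus (x : Csq) (hx : x ≠ 0) (u : Fin 3 → Csq) :
    extD omegaPlus x u = ∑ i : Fin 3, (-1 : ℂ) ^ (i : ℕ) *
      (Cp (fun j => u (i.succAbove j)) *
        (-Complex.I * (starRingEnd ℂ x.1 * (u i).1 + x.1 * starRingEnd ℂ (u i).1
          + starRingEnd ℂ x.2 * (u i).2 + x.2 * starRingEnd ℂ (u i).2) / (Rsq x : ℂ)^2)) := by
  rw [extD]
  congr 1; funext i
  rw [omegaPlus_eq, fderiv_gC x hx]


/-- On `ℂ² \ {0}`, the fundamental forms `ω₊` and `ω₋` of the Hopf metric with respect to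
the two complex structures `J₊` and `J₋` satisfy `d^c₊ ω₊ = -d^c₋ ω₋`: the torsion-matching
condition for a generalized Kähler structure. -/
theorem dc_plus_eq_neg_dc_minus :
    ∀ x : Csq, x ≠ 0 → ∀ v : Fin 3 → Csq, dcOmegaPlus x v = - dcOmegaMinus x v := by
  intro x hx v
  have hne : ((Rsq x : ℝ) : ℂ) ≠ 0 := by
    exact_mod_cast (ne_of_gt (Rsq_pos x hx))
  rw [dcOmegaPlus, dcOmegaMinus, extD_omegaPlus x hx, extD_omegaMinus x hx, neg_neg]
  rw [Fin.sum_univ_three, Fin.sum_univ_three]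
  have e00 : (0 : Fin 3).succAbove 0 = 1 := rfl
  have e01 : (0 : Fin 3).succAbove 1 = 2 := rfl
  have e10 : (1 : Fin 3).succAbove 0 = 0 := rfl
  have e11 : (1 : Fin 3).succAbove 1 = 2 := rfl
  have e20 : (2 : Fin 3).succAbove 0 = 0 := rfl
  have e21 : (2 : Fin 3).succAbove 1 = 1 := rfl
  simp only [Cm, Cp, e00, e01, e10, e11, e20, e21, Jplus, Jminus, map_mul, map_neg,
    Complex.conj_I, Fin.val_zero, Fin.val_one, Fin.val_two, pow_zero, pow_one]
  field_simp
  ring
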